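/- For n ≥ 2 and 0 < β < 1, ∫_{H^n} |u_β|^{2n/(n-2k)} dV_h = 2^n ω_{n-1} ∫_0^{√((1+β)/(1-β))} z^{n-1}(1+z^2)^{-n} dz, where u_β(r) = (1-β^2)^{(n-2k)/4}(cosh r - β)^{k-n/2} is the radial function on hyperbolic n-space and ω_{n-1} is the surface area of the unit sphere S^{n-1}. -/

import Mathlib

open MeasureTheory

/-- Surface area of the unit `m`-sphere `S^m ⊂ ℝ^{m+1}`: `ω_m = 2 π^{(m+1)/2} / Γ((m+1)/2)`. -/
noncomputable def sphereArea (m : ℕ) : ℝ :=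
  2 * Real.pi ^ (((m : ℝ) + 1) / 2) / Real.Gamma (((m : ℝ) + 1) / 2)

/-!
Raising `u_β` to the power `q = 2n/(n-2k)` leaves `(1 - β²)^{n/2} (cosh r - β)^{-n}`.
With `Z = √((1+β)/(1-β))`, the substitution `z = Z tanh (r/2)` maps `(0, ∞)` onto `(0, Z)`,
and since `cosh r - β = (1 - β) cosh²(r/2) (1 + z²)`, `sinh r = 2 cosh²(r/2) z / Z` and
`dz = Z dr / (2 cosh²(r/2))`, the integrand `|u_β|^q sinh^{n-1} r dr` becomes
`2^n z^{n-1} (1 + z²)^{-n} dz`.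
-/

open Real Set

theorem Real.hasDerivAt_tanh (x : ℝ) : HasDerivAt tanh (1 / cosh x ^ 2) x := by
  have h := (hasDerivAt_sinh x).div (hasDerivAt_cosh x) (cosh_pos x).ne'
  rw [← sq, ← sq, cosh_sq_sub_sinh_sq] at h
  rwa [show tanh = sinh / cosh from funext tanh_eq_sinh_div_cosh]

theorem Real.tanh_pos {x : ℝ} (hx : 0 < x) : 0 < tanh x := by
  rw [tanh_eq_sinh_div_cosh]
  exact div_pos (sinh_pos_iff.mpr hx) (cosh_pos x)

theorem Real.image_tanh_Ioi_zero : tanh '' Ioi 0 = Ioo 0 1 := by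
  refine Subset.antisymm ?_ fun t ht ↦
    ⟨artanh t, artanh_pos ht, tanh_artanh ⟨by linarith [ht.1], ht.2⟩⟩
  rintro _ ⟨x, hx, rfl⟩
  exact ⟨tanh_pos hx, tanh_lt_one x⟩

theorem Real.sinh_eq_two_mul_cosh_half_sq_mul_tanh_half (r : ℝ) :
    sinh r = 2 * cosh (r / 2) ^ 2 * tanh (r / 2) := by
  have h := sinh_two_mul (r / 2)
  rw [show 2 * (r / 2) = r by ring] at h
  have := (cosh_pos (r / 2)).ne'
  rw [h, tanh_eq_sinh_div_cosh]
  field_simp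

theorem integral_Ioo_eq_integral_Ioi_tanh_half {Z : ℝ} (hZ : 0 < Z) (g : ℝ → ℝ) :
    ∫ z in Ioo 0 Z, g z = ∫ r in Ioi 0, Z / (2 * cosh (r / 2) ^ 2) * g (Z * tanh (r / 2)) := by
  have himage : (fun r ↦ Z * tanh (r / 2)) '' Ioi 0 = Ioo 0 Z := by
    have hhalf : (· / 2) '' Ioi (0 : ℝ) = Ioi 0 := by
      ext x
      refine ⟨?_, fun hx ↦ ⟨2 * x, by simpa using hx, by ring⟩⟩
      rintro ⟨y, hy, rfl⟩
      exact half_pos (mem_Ioi.mp hy)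
    rw [show (fun r ↦ Z * tanh (r / 2)) = (Z * ·) ∘ tanh ∘ (· / 2) from rfl, image_comp,
      image_comp, hhalf, image_tanh_Ioi_zero, image_mul_left_Ioo hZ, mul_zero, mul_one]
  have hderiv : ∀ r ∈ Ioi (0 : ℝ),
      HasDerivWithinAt (fun r ↦ Z * tanh (r / 2)) (Z / (2 * cosh (r / 2) ^ 2)) (Ioi 0) r := by
    intro r _
    refine (((hasDerivAt_tanh (r / 2)).comp r ((hasDerivAt_id r).div_const 2)).const_mul Z
      |>.congr_deriv ?_).hasDerivWithinAt
    field_simp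
  have hinj : InjOn (fun r ↦ Z * tanh (r / 2)) (Ioi 0) := fun a _ b _ h ↦ by
    simpa using tanh_injective (mul_left_cancel₀ hZ.ne' h)
  rw [← himage, integral_image_eq_integral_abs_deriv_smul measurableSet_Ioi hderiv hinj]
  refine setIntegral_congr_fun measurableSet_Ioi fun r _ ↦ ?_
  rw [abs_of_pos (by positivity), smul_eq_mul]

theorem abs_rpow_mul_rpow_rpow_eq {a b n k : ℝ} (ha : 0 ≤ a) (hb : 0 ≤ b)
    (hnk : n - 2 * k ≠ 0) :
    |a ^ ((n - 2 * k) / 4) * b ^ (k - n / 2)| ^ (2 * n / (n - 2 * k)) = a ^ (n / 2) * b ^ (-n) := by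
  rw [abs_of_nonneg (by positivity), mul_rpow (by positivity) (by positivity), ← rpow_mul ha,
    ← rpow_mul hb]
  congr 2
  · field_simp
    ring
  · rw [mul_div_assoc', div_eq_iff hnk]
    ring

theorem cosh_sub_eq_mul_one_add_sq_tanh_half {β Z : ℝ} (hZ : Z ^ 2 * (1 - β) = 1 + β)
    (r : ℝ) :
    cosh r - β = (1 - β) * cosh (r / 2) ^ 2 * (1 + (Z * tanh (r / 2)) ^ 2) := by
  have h := cosh_two_mul (r / 2)
  rw [show 2 * (r / 2) = r by ring] at h
  have := (cosh_pos (r / 2)).ne'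
  rw [h, tanh_eq_sinh_div_cosh]
  field_simp
  linear_combination (- sinh (r / 2) ^ 2) * hZ + β * cosh_sq_sub_sinh_sq (r / 2)

theorem extremal_integrand_eq {n : ℕ} (hn : 0 < n) {k β Z : ℝ} (hnk : (n : ℝ) - 2 * k ≠ 0)
    (hβ : β < 1) (hZ : 0 ≤ Z) (hZβ : Z ^ 2 * (1 - β) = 1 + β) (r : ℝ) :
    |(1 - β ^ 2) ^ (((n : ℝ) - 2 * k) / 4) * (cosh r - β) ^ (k - (n : ℝ) / 2)| ^
        (2 * (n : ℝ) / ((n : ℝ) - 2 * k)) * sinh r ^ (n - 1)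
      = 2 ^ n * (Z / (2 * cosh (r / 2) ^ 2) *
          ((Z * tanh (r / 2)) ^ (n - 1) * (1 + (Z * tanh (r / 2)) ^ 2) ^ (-(n : ℝ)))) := by
  obtain ⟨m, rfl⟩ : ∃ m, n = m + 1 := ⟨n - 1, by omega⟩
  have h1β : 0 < 1 - β := by linarith
  have ha : 1 - β ^ 2 = (Z * (1 - β)) ^ 2 := by linear_combination (-(1 - β)) * hZβ
  have hb : 0 ≤ cosh r - β := by linarith [one_le_cosh r]
  rw [abs_rpow_mul_rpow_rpow_eq (ha ▸ sq_nonneg _) hb hnk, ha,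
    rpow_div_two_eq_sqrt _ (sq_nonneg _), sqrt_sq (by positivity), rpow_neg hb,
    rpow_neg (by positivity), rpow_natCast, rpow_natCast, rpow_natCast,
    cosh_sub_eq_mul_one_add_sq_tanh_half hZβ, sinh_eq_two_mul_cosh_half_sq_mul_tanh_half,
    Nat.add_sub_cancel]
  have := (cosh_pos (r / 2)).ne'
  simp only [mul_pow]
  field_simp
  ring

theorem lq_norm_of_extremal_general (n k : ℕ) (hnk : 2 * k < n)
    (β : ℝ) (hβ0 : 0 < β) (hβ1 : β < 1) :
    sphereArea (n - 1) *
        ∫ r in Set.Ioi (0 : ℝ),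
          |(1 - β ^ 2) ^ (((n : ℝ) - 2 * k) / 4) *
              (Real.cosh r - β) ^ ((k : ℝ) - (n : ℝ) / 2)| ^ (2 * (n : ℝ) / ((n : ℝ) - 2 * k)) *
            Real.sinh r ^ (n - 1)
      = 2 ^ n * sphereArea (n - 1) *
          ∫ z in (0 : ℝ)..(Real.sqrt ((1 + β) / (1 - β))),
            z ^ (n - 1) * (1 + z ^ 2) ^ (-(n : ℝ)) := by
  have h1β : 0 < 1 - β := by linarith
  have hZ : 0 < √((1 + β) / (1 - β)) := sqrt_pos.mpr (by positivity)
  have hZβ : √((1 + β) / (1 - β)) ^ 2 * (1 - β) = 1 + β := by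
    rw [sq_sqrt (by positivity)]
    field_simp
  have hnk' : (n : ℝ) - 2 * k ≠ 0 := by
    have : (2 * k : ℝ) < n := by exact_mod_cast hnk
    linarith
  rw [intervalIntegral.integral_of_le hZ.le, integral_Ioc_eq_integral_Ioo,
    integral_Ioo_eq_integral_Ioi_tanh_half hZ, setIntegral_congr_fun measurableSet_Ioi
      fun r _ ↦ extremal_integrand_eq (by omega) hnk' hβ1 hZ.le hZβ r, integral_const_mul]
  ring

theorem lq_norm_of_extremal (n k : ℕ) (hn : 2 ≤ n) (hk : 0 < k) (hnk : 2 * k < n)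
    (β : ℝ) (hβ0 : 0 < β) (hβ1 : β < 1) :
    sphereArea (n - 1) *
        ∫ r in Set.Ioi (0 : ℝ),
          |(1 - β ^ 2) ^ (((n : ℝ) - 2 * k) / 4) *
              (Real.cosh r - β) ^ ((k : ℝ) - (n : ℝ) / 2)| ^ (2 * (n : ℝ) / ((n : ℝ) - 2 * k)) *
            Real.sinh r ^ (n - 1)
      = 2 ^ n * sphereArea (n - 1) *
          ∫ z in (0 : ℝ)..(Real.sqrt ((1 + β) / (1 - β))),
            z ^ (n - 1) * (1 + z ^ 2) ^ (-(n : ℝ)) :=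
  lq_norm_of_extremal_general n k hnk β hβ0 hβ1
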